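/- arXiv:1210.0184 — 2 statements merged into one kernel-verified Lean document; each statement's English description precedes it below -/
import Mathlib

section
/- Let T = [[a,b],[c,d]] be a J-unitary operator on K and let z be a complex number with |z| = 1. Then for every φ ∈ K one has Tφ = zφ if and only if V(z̄T)φ = φ. In particular ker(T − z·1) = ker(V(z̄T) − 1), so the geometric multiplicity of z as an eigenvalue of T equals the multiplicity of 1 as an eigenvalue of the unitary V(z̄T). -/
/-!
For `S = [[a,b],[c,d]]` with `d` invertible, the Potapov–Ginzburg transform
`[[a - b d⁻¹ c, b d⁻¹], [-d⁻¹ c, d⁻¹]]` sends `(x, y')` to `(x', y)` exactly when `S` sends `(x, y)`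
to `(x', y')`, so it has the same fixed vectors as `S`; and `V(z̄T)` is the transform of `z̄T`,
whose fixed vectors are the `z`-eigenvectors of `T`. That `V(z̄T)` has this form is where
`J`-unitarity enters: `T*JT = J = TJT*` gives `a*a ≥ 1`, `aa* ≥ 1`, `d*d ≥ 1`, `dd* ≥ 1`, so `a`
and `d` are invertible, and `a*(a - b d⁻¹ c) = a*a - c*d d⁻¹ c = a*a - c*c = 1`.
-/

noncomputable section

open ContinuousLinearMap

variable {H : Type*} [NormedAddCommGroup H] [InnerProductSpace ℂ H] [CompleteSpace H]
  [TopologicalSpace.SeparableSpace H]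

local notation "K" => WithLp 2 (H × H)

/-- The 2×2 block operator `[[a,b],[c,d]]` on `K = H ⊕ H`. -/
def blk (a b c d : H →L[ℂ] H) : K →L[ℂ] K :=
  (((WithLp.prodContinuousLinearEquiv 2 ℂ H H).symm : (H × H) →L[ℂ] K).comp
      ((((a.comp (fst ℂ H H)) + (b.comp (snd ℂ H H))).prod
        ((c.comp (fst ℂ H H)) + (d.comp (snd ℂ H H)))))).comp
    ((WithLp.prodContinuousLinearEquiv 2 ℂ H H : K →L[ℂ] (H × H)))

/-- The fundamental symmetry `J = [[1,0],[0,-1]]`. -/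
def fundJ : K →L[ℂ] K := blk 1 0 0 (-1)

/-- A bounded operator `T` on the Krein space `(K, J)` is `J`-unitary if it is invertible
and `T* J T = J`. -/
def IsJUnitary (T : K →L[ℂ] K) : Prop :=
  IsUnit T ∧ star T * fundJ * T = fundJ

lemma mul_mul_eq_of_mul_mul_eq {M : Type*} [Monoid M] {j s t : M} (hj : j * j = 1)
    (ht : IsUnit t) (h : s * j * t = j) : t * j * s = j := by
  obtain ⟨u, rfl⟩ := ht
  have hsj : s * j = j * ↑u⁻¹ := (Units.eq_mul_inv_iff_mul_eq u).2 h
  calc ↑u * j * s = ↑u * j * (s * j) * j := by rw [mul_assoc _ (s * j), mul_assoc s, hj, mul_one]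
    _ = ↑u * (j * j) * ↑u⁻¹ * j := by rw [hsj]; simp only [mul_assoc]
    _ = j := by rw [hj, mul_one, Units.mul_inv, one_mul]

lemma isUnit_of_isUnit_mul_of_isUnit_mul {M : Type*} [Monoid M] {x y : M}
    (hxy : IsUnit (x * y)) (hyx : IsUnit (y * x)) : IsUnit x :=
  isUnit_iff_exists_and_exists.2
    ⟨⟨y * ↑hxy.unit⁻¹, by rw [← mul_assoc]; exact hxy.mul_val_inv⟩,
      ⟨↑hyx.unit⁻¹ * y, by rw [mul_assoc]; exact hyx.val_inv_mul⟩⟩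

lemma CStarAlgebra.isUnit_of_one_le_star_mul_self_of_one_le_mul_star_self {A : Type*}
    [CStarAlgebra A] [PartialOrder A] [StarOrderedRing A] {x : A}
    (h₁ : 1 ≤ star x * x) (h₂ : 1 ≤ x * star x) : IsUnit x :=
  isUnit_of_isUnit_mul_of_isUnit_mul (isUnit_of_le 1 h₂) (isUnit_of_le 1 h₁)

section Blocks

variable {E : Type*} [NormedAddCommGroup E] [InnerProductSpace ℂ E]
  {a b c d a' b' c' d' : E →L[ℂ] E}

@[simp]
lemma blk_apply_fst (φ : WithLp 2 (E × E)) : (blk a b c d φ).fst = a φ.fst + b φ.snd := rfl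

@[simp]
lemma blk_apply_snd (φ : WithLp 2 (E × E)) : (blk a b c d φ).snd = c φ.fst + d φ.snd := rfl

lemma blk_apply_eq_iff (φ ψ : WithLp 2 (E × E)) :
    blk a b c d φ = ψ ↔ a φ.fst + b φ.snd = ψ.fst ∧ c φ.fst + d φ.snd = ψ.snd :=
  (WithLp.ofLp_injective 2).eq_iff.symm.trans Prod.ext_iff

lemma blk_mul : blk a b c d * blk a' b' c' d' =
    blk (a * a' + b * c') (a * b' + b * d') (c * a' + d * c') (c * b' + d * d') := by
  ext1 φ
  refine ((blk_apply_eq_iff _ _).2 ⟨?_, ?_⟩).symm <;>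
    simp only [add_apply, mul_apply_eq_comp, blk_apply_fst, blk_apply_snd, map_add] <;> abel

lemma blk_one : blk (1 : E →L[ℂ] E) 0 0 1 = 1 := by
  ext1 φ
  simp [blk_apply_eq_iff]

lemma smul_blk (z : ℂ) : z • blk a b c d = blk (z • a) (z • b) (z • c) (z • d) := by
  ext1 φ
  refine ((blk_apply_eq_iff _ _).2 ⟨?_, ?_⟩).symm <;> simp

lemma star_blk [CompleteSpace E] :
    star (blk a b c d) = blk (star a) (star c) (star b) (star d) := by
  refine ((eq_adjoint_iff _ _).2 fun φ ψ ↦ ?_).symm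
  simp only [WithLp.prod_inner_apply, WithLp.ofLp_fst, WithLp.ofLp_snd, blk_apply_fst,
    blk_apply_snd, inner_add_left, inner_add_right, star_eq_adjoint, adjoint_inner_left]
  ring

lemma blk_inj : blk a b c d = blk a' b' c' d' ↔ a = a' ∧ b = b' ∧ c = c' ∧ d = d' := by
  refine ⟨fun h ↦ ?_, by rintro ⟨rfl, rfl, rfl, rfl⟩; rfl⟩
  have hx (x : E) := (blk_apply_eq_iff _ _).1 (DFunLike.congr_fun h (WithLp.toLp 2 (x, 0)))
  have hy (y : E) := (blk_apply_eq_iff _ _).1 (DFunLike.congr_fun h (WithLp.toLp 2 (0, y)))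
  simp only [blk_apply_fst, blk_apply_snd, WithLp.toLp_fst, WithLp.toLp_snd, map_zero, add_zero,
    zero_add] at hx hy
  exact ⟨ext fun x ↦ (hx x).1, ext fun y ↦ (hy y).1, ext fun x ↦ (hx x).2, ext fun y ↦ (hy y).2⟩

lemma fundJ_mul_fundJ : (fundJ : WithLp 2 (E × E) →L[ℂ] _) * fundJ = 1 := by
  rw [fundJ, blk_mul]
  simpa using blk_one

lemma star_blk_mul_fundJ_mul_blk [CompleteSpace E] (a b c d : E →L[ℂ] E) :
    star (blk a b c d) * fundJ * blk a b c d =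
      blk (star a * a - star c * c) (star a * b - star c * d)
        (star b * a - star d * c) (star b * b - star d * d) := by
  rw [star_blk, fundJ, blk_mul, blk_mul]
  congr 1 <;> noncomm_ring

lemma blk_mul_fundJ_mul_star_blk [CompleteSpace E] (a b c d : E →L[ℂ] E) :
    blk a b c d * fundJ * star (blk a b c d) =
      blk (a * star a - b * star b) (a * star c - b * star d)
        (c * star a - d * star b) (c * star c - d * star d) := by
  rw [star_blk, fundJ, blk_mul, blk_mul]
  congr 1 <;> noncomm_ring

lemma blk_apply_eq_self_iff_of_mul_eq_one {D : E →L[ℂ] E} (hDd : D * d = 1) (hdD : d * D = 1)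
    (φ : WithLp 2 (E × E)) :
    blk a b c d φ = φ ↔ blk (a - b * D * c) (b * D) (-(D * c)) D φ = φ := by
  have hDd' (v : E) : D (d v) = v := DFunLike.congr_fun hDd v
  have hdD' (v : E) : d (D v) = v := DFunLike.congr_fun hdD v
  rw [blk_apply_eq_iff, blk_apply_eq_iff]
  have hsnd : c φ.fst + d φ.snd = φ.snd ↔ -(D * c) φ.fst + D φ.snd = φ.snd := by
    constructor
    · intro h
      calc -(D * c) φ.fst + D φ.snd = -(D * c) φ.fst + D (c φ.fst + d φ.snd) := by rw [h]
        _ = φ.snd := by rw [map_add, hDd', mul_apply_eq_comp, neg_add_cancel_left]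
    · intro h
      calc c φ.fst + d φ.snd = c φ.fst + d (-(D * c) φ.fst + D φ.snd) := by rw [h]
        _ = φ.snd := by rw [mul_apply_eq_comp, map_add, map_neg, hdD', hdD', add_neg_cancel_left]
  rw [hsnd]
  refine and_congr_left fun h ↦ ?_
  have hfst : a φ.fst + b φ.snd = (a - b * D * c) φ.fst + (b * D) φ.snd := by
    nth_rewrite 1 [← h]
    simp only [sub_apply, mul_apply_eq_comp, map_add, map_neg]
    abel
  rw [hfst]

lemma blk_apply_eq_smul_iff_of_mul_eq_one {D : E →L[ℂ] E} (hDd : D * d = 1) (hdD : d * D = 1)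
    {z : ℂ} (hz : z ≠ 0) (φ : WithLp 2 (E × E)) :
    blk a b c d φ = z • φ ↔
      blk (z⁻¹ • (a - b * D * c)) (b * D) (-(D * c)) (z • D) φ = φ := by
  have hDd' : (z • D) * (z⁻¹ • d) = 1 := by
    rw [smul_mul_smul_comm, mul_inv_cancel₀ hz, one_smul, hDd]
  have hdD' : (z⁻¹ • d) * (z • D) = 1 := by
    rw [smul_mul_smul_comm, inv_mul_cancel₀ hz, one_smul, hdD]
  rw [← inv_smul_eq_iff₀ hz, ← smul_apply, smul_blk,
    blk_apply_eq_self_iff_of_mul_eq_one hDd' hdD']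
  congr! 3 <;> simp only [smul_mul_assoc, mul_smul_comm, smul_smul, smul_sub, mul_assoc,
    inv_mul_cancel₀ hz, mul_inv_cancel₀ hz, one_smul]

end Blocks

namespace IsJUnitary

variable {E : Type*} [NormedAddCommGroup E] [InnerProductSpace ℂ E] [CompleteSpace E]
  {a b c d : E →L[ℂ] E}

lemma mul_fundJ_mul_star {T : WithLp 2 (E × E) →L[ℂ] WithLp 2 (E × E)} (hT : IsJUnitary T) :
    T * fundJ * star T = fundJ :=
  mul_mul_eq_of_mul_mul_eq fundJ_mul_fundJ hT.1 hT.2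

lemma blk_isometry_relations (hT : IsJUnitary (blk a b c d)) :
    star a * a - star c * c = 1 ∧ star a * b - star c * d = 0 ∧
      star b * a - star d * c = 0 ∧ star b * b - star d * d = -1 :=
  blk_inj.1 (by rw [← star_blk_mul_fundJ_mul_blk]; exact hT.2)

lemma blk_coisometry_relations (hT : IsJUnitary (blk a b c d)) :
    a * star a - b * star b = 1 ∧ a * star c - b * star d = 0 ∧
      c * star a - d * star b = 0 ∧ c * star c - d * star d = -1 :=
  blk_inj.1 (by rw [← blk_mul_fundJ_mul_star_blk]; exact hT.mul_fundJ_mul_star)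

lemma isUnit_topLeft (hT : IsJUnitary (blk a b c d)) : IsUnit a := by
  obtain ⟨h₁, -⟩ := hT.blk_isometry_relations
  obtain ⟨h₂, -⟩ := hT.blk_coisometry_relations
  refine CStarAlgebra.isUnit_of_one_le_star_mul_self_of_one_le_mul_star_self ?_ ?_
  · exact h₁ ▸ sub_le_self _ (star_mul_self_nonneg c)
  · exact h₂ ▸ sub_le_self _ (mul_star_self_nonneg b)

lemma isUnit_bottomRight (hT : IsJUnitary (blk a b c d)) : IsUnit d := by
  obtain ⟨-, -, -, h₁⟩ := hT.blk_isometry_relations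
  obtain ⟨-, -, -, h₂⟩ := hT.blk_coisometry_relations
  refine CStarAlgebra.isUnit_of_one_le_star_mul_self_of_one_le_mul_star_self ?_ ?_
  · rw [← neg_neg (1 : E →L[ℂ] E), ← h₁, neg_sub]
    exact sub_le_self _ (star_mul_self_nonneg b)
  · rw [← neg_neg (1 : E →L[ℂ] E), ← h₂, neg_sub]
    exact sub_le_self _ (mul_star_self_nonneg c)

lemma sub_mul_inverse_mul_eq_inverse_star (hT : IsJUnitary (blk a b c d)) :
    a - b * Ring.inverse d * c = Ring.inverse (star a) := by
  obtain ⟨h₁₁, h₁₂, -⟩ := hT.blk_isometry_relations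
  have h : star a * (a - b * Ring.inverse d * c) = 1 := calc
    _ = star a * a - star c * (d * Ring.inverse d) * c := by
      rw [mul_sub, ← mul_assoc, ← mul_assoc, sub_eq_zero.1 h₁₂, mul_assoc (star c)]
    _ = 1 := by rw [Ring.mul_inverse_cancel _ hT.isUnit_bottomRight, mul_one, h₁₁]
  rw [← Ring.inverse_mul_cancel_left _ (a - _) hT.isUnit_topLeft.star, h, mul_one]

end IsJUnitary

/-- Theorem 3.12 / Proposition 3.13 of the paper: for a `J`-unitary
`T = [[a,b],[c,d]]` and `z` on the unit circle, `φ` is an eigenvector of `T` for the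
eigenvalue `z` if and only if it is a fixed vector of the unitary
`V(z̄T) = [[z̄(a*)⁻¹, bd⁻¹],[−d⁻¹c, zd⁻¹]]`; in particular the eigenspaces coincide. -/
theorem eigenvalue_unit_circle_iff_fixed_point (a b c d : H →L[ℂ] H)
    (hT : IsJUnitary (blk a b c d)) (z : ℂ) (hz : ‖z‖ = 1) :
    (∀ φ : K, (blk a b c d) φ = z • φ ↔
      (blk ((starRingEnd ℂ z) • Ring.inverse (star a)) (b * Ring.inverse d)
        (-(Ring.inverse d * c)) (z • Ring.inverse d)) φ = φ) ∧
    LinearMap.ker (((blk a b c d - z • (1 : K →L[ℂ] K) : K →L[ℂ] K) : K →ₗ[ℂ] K)) =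
      LinearMap.ker (((blk ((starRingEnd ℂ z) • Ring.inverse (star a)) (b * Ring.inverse d)
        (-(Ring.inverse d * c)) (z • Ring.inverse d) - (1 : K →L[ℂ] K) : K →L[ℂ] K) : K →ₗ[ℂ] K)) := by
  have hd := hT.isUnit_bottomRight
  have hpoint (φ : K) := blk_apply_eq_smul_iff_of_mul_eq_one (a := a) (b := b) (c := c)
    (Ring.inverse_mul_cancel _ hd) (Ring.mul_inverse_cancel _ hd)
    (norm_ne_zero_iff.1 (hz ▸ one_ne_zero)) φ
  rw [← Complex.inv_eq_conj hz, ← hT.sub_mul_inverse_mul_eq_inverse_star]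
  refine ⟨hpoint, ?_⟩
  ext φ
  simpa [sub_eq_zero] using hpoint φ
end
end

section
/- Let T be a J-unitary operator on K such that T − z·1 is a Fredholm operator for every z on the unit circle. Then every point z of σ(T) lying on the unit circle is an eigenvalue of T with finite-dimensional eigenspace. -/
noncomputable section

open ContinuousLinearMap

variable {H : Type*} [NormedAddCommGroup H] [InnerProductSpace ℂ H] [CompleteSpace H]
  [TopologicalSpace.SeparableSpace H]

local notation "K" => WithLp 2 (H × H)

/-- A bounded operator on a Hilbert space is Fredholm: finite-dimensional kernel,
closed range, and finite-dimensional orthogonal complement of the range. -/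
def IsFredholmOp (A : K →L[ℂ] K) : Prop :=
  FiniteDimensional ℂ (LinearMap.ker (A : K →ₗ[ℂ] K)) ∧ IsClosed (Set.range A : Set K) ∧
    FiniteDimensional ℂ ↥((LinearMap.range (A : K →ₗ[ℂ] K))ᗮ)

/-! If `T - z` were injective for some `z ∈ σ(T)` with `|z| = 1`, then, because
`T J T* = J` and `z z̄ = 1`, the symmetry `J` would map `ker (T* - z̄)` into `ker (T - z) = 0`,
so `T - z` would also have dense range; with closed range it would be bijective, hence invertible. -/

theorem IsUnit.mul_mul_eq_of_mul_mul_eq {M : Type*} [Monoid M] {T J S : M} (hT : IsUnit T)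
    (hJ : J * J = 1) (h : S * J * T = J) : T * J * S = J := by
  obtain ⟨u, rfl⟩ := hT
  have hinv : J * S * J = ↑u⁻¹ := by
    rw [← Units.mul_eq_one_iff_eq_inv]
    simp only [mul_assoc] at h ⊢
    rw [h, hJ]
  calc ↑u * J * S = ↑u * (J * S * J) * J := by simp only [mul_assoc, hJ, mul_one]
    _ = J := by rw [hinv, Units.mul_inv, one_mul]

section Hilbert

open ComplexConjugate

variable {E : Type*} [NormedAddCommGroup E] [InnerProductSpace ℂ E] [CompleteSpace E]

theorem range_eq_top_of_isClosed_of_ker_adjoint_eq_bot {A : E →L[ℂ] E}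
    (hcl : IsClosed (Set.range A)) (h : (adjoint A).ker = ⊥) :
    A.range = ⊤ := by
  have : CompleteSpace A.range := hcl.completeSpace_coe
  rw [← Submodule.orthogonal_eq_bot_iff]
  exact (orthogonal_range A).trans h

theorem isUnit_of_ker_eq_bot_of_ker_star_eq_bot {A : E →L[ℂ] E} (hker : A.ker = ⊥)
    (hcl : IsClosed (Set.range A)) (hker' : (star A).ker = ⊥) : IsUnit A :=
  isUnit_iff_bijective.mpr ⟨LinearMap.ker_eq_bot.mp hker,
    LinearMap.range_eq_top.mp (range_eq_top_of_isClosed_of_ker_adjoint_eq_bot hcl hker')⟩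

theorem apply_mem_ker_sub_smul_of_mem_ker_star {T J : E →L[ℂ] E} (hTJ : T * J * star T = J)
    {z : ℂ} (hz : ‖z‖ = 1) {v : E} (hv : v ∈ (star (T - z • 1)).ker) : J v ∈ (T - z • 1).ker := by
  have hTv : star T v = conj z • v := by
    simpa [star_sub, star_smul, sub_eq_zero] using hv
  have hJv : J v = conj z • T (J v) := by
    calc J v = (T * J * star T) v := by rw [hTJ]
      _ = conj z • T (J v) := by simp [hTv]
  have hzz : z * conj z = 1 := by simp [Complex.mul_conj', hz]
  suffices T (J v) = z • J v by simpa [sub_eq_zero] using this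
  calc T (J v) = z • conj z • T (J v) := by rw [smul_smul, hzz, one_smul]
    _ = z • J v := by rw [← hJv]

theorem ker_star_sub_smul_eq_bot {T J : E →L[ℂ] E} (hJ : J * J = 1) (hTJ : T * J * star T = J)
    {z : ℂ} (hz : ‖z‖ = 1) (h : (T - z • 1).ker = ⊥) : (star (T - z • 1)).ker = ⊥ := by
  refine (Submodule.eq_bot_iff _).mpr fun v hv => ?_
  have hJv := apply_mem_ker_sub_smul_of_mem_ker_star hTJ hz hv
  rw [h, Submodule.mem_bot] at hJv
  simpa [hJv] using (ContinuousLinearMap.ext_iff.mp hJ v).symm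

end Hilbert

theorem fundJ_mul_self : (fundJ : K →L[ℂ] K) * fundJ = 1 := by
  ext x
  simp [fundJ, blk]
  rfl

theorem IsJUnitary.mul_fundJ_mul_star_s13 {T : K →L[ℂ] K} (hT : IsJUnitary T) :
    T * fundJ * star T = fundJ :=
  hT.1.mul_mul_eq_of_mul_mul_eq fundJ_mul_self hT.2

/-- Proposition 4.3 (vii) of the paper: if `T` is an `𝕊¹`-Fredholm
`J`-unitary, every spectral point of `T` on the unit circle is an eigenvalue of finite
multiplicity. -/
theorem s1Fredholm_unit_spectrum_eigenvalue (T : K →L[ℂ] K) (hT : IsJUnitary T)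
    (hF : ∀ z : ℂ, ‖z‖ = 1 → IsFredholmOp (T - z • (1 : K →L[ℂ] K))) :
    ∀ z ∈ spectrum ℂ T, ‖z‖ = 1 →
      LinearMap.ker ((T - z • (1 : K →L[ℂ] K) : K →L[ℂ] K) : K →ₗ[ℂ] K) ≠ ⊥ ∧
      FiniteDimensional ℂ (LinearMap.ker ((T - z • (1 : K →L[ℂ] K) : K →L[ℂ] K) : K →ₗ[ℂ] K)) := by
  intro z hz hz1
  obtain ⟨hker, hcl, -⟩ := hF z hz1
  refine ⟨fun hinj => spectrum.mem_iff.mp hz ?_, hker⟩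
  have hunit : IsUnit (T - z • 1) := isUnit_of_ker_eq_bot_of_ker_star_eq_bot hinj hcl
    (ker_star_sub_smul_eq_bot fundJ_mul_self hT.mul_fundJ_mul_star_s13 hz1 hinj)
  simpa [Algebra.algebraMap_eq_smul_one] using hunit.neg
end
end
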